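/- arXiv:1707.03860 — 7 statements merged into one kernel-verified Lean document; each statement's English description precedes it below -/
import Mathlib

section
/- Let n be an integer and let Θ be a root (in some commutative ring extension, e.g., the complex numbers) of f_n(x) = x^3 - n*x^2 + (n-1)*x - 1. Then α = Θ^2 + (1-n)*Θ + 1 is a root of f_{5-n}(x) = x^3 - (5-n)*x^2 + (4-n)*x - 1. -/
/-- If `Θ` is a complex root of `f_n(x) = x^3 - n x^2 + (n-1) x - 1`, then
`α = Θ^2 + (1-n) Θ + 1` is a root of `f_{5-n}(x) = x^3 - (5-n) x^2 + (4-n) x - 1`. -/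
theorem alpha_root_f_sub (n : ℤ) (Θ : ℂ)
    (hΘ : Θ ^ 3 - (n : ℂ) * Θ ^ 2 + ((n : ℂ) - 1) * Θ - 1 = 0) :
    (Θ ^ 2 + (1 - (n : ℂ)) * Θ + 1) ^ 3
      - (5 - (n : ℂ)) * (Θ ^ 2 + (1 - (n : ℂ)) * Θ + 1) ^ 2
      + (4 - (n : ℂ)) * (Θ ^ 2 + (1 - (n : ℂ)) * Θ + 1) - 1 = 0 := by
  linear_combination (Θ ^ 3 + (3 - 2 * (n : ℂ)) * Θ ^ 2
    + ((n : ℂ) ^ 2 - 3 * (n : ℂ) + 2) * Θ + 1) * hΘ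
end

section
/- Let n be an integer and Θ a complex root of f_n(x) = x^3 - n*x^2 + (n-1)*x - 1. Set α = Θ^2 + (1-n)*Θ + 1. Then α^2 + (n-4)*α + 1 = Θ. In other words, applying the map x ↦ x^2 + (1-n)x + 1 followed by x ↦ x^2 + (n-4)x + 1 returns Θ. -/
/-- If `Θ` is a complex root of `f_n` and `α = Θ^2 + (1-n) Θ + 1`, then
`α^2 + (n-4) α + 1 = Θ`. -/
theorem double_dual_returns_theta (n : ℤ) (Θ : ℂ)
    (hΘ : Θ ^ 3 - (n : ℂ) * Θ ^ 2 + ((n : ℂ) - 1) * Θ - 1 = 0) :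
    (Θ ^ 2 + (1 - (n : ℂ)) * Θ + 1) ^ 2
      + ((n : ℂ) - 4) * (Θ ^ 2 + (1 - (n : ℂ)) * Θ + 1) + 1 = Θ := by
  linear_combination (Θ + 2 - (n : ℂ)) * hΘ
end

section
/- For all integers n, c, and d, the polynomial identity p_{5-n}(p_n(c)) = c + f_n(c)*(c - n + 2) holds, where p_n(x) = x^2 + (1-n)x + 1, p_{5-n}(x) = x^2 + (n-4)x + 1, and f_n(x) = x^3 - n x^2 + (n-1)x - 1. In particular, if d divides f_n(c), then p_{5-n}(p_n(c)) ≡ c (mod d). -/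
/-- For all integers `n`, `c`, `d`: `p_{5-n}(p_n(c)) = c + f_n(c) * (c - n + 2)` where
`p_n(x) = x^2 + (1-n) x + 1`, `p_{5-n}(x) = x^2 + (n-4) x + 1` and
`f_n(x) = x^3 - n x^2 + (n-1) x - 1`. In particular, if `d ∣ f_n(c)`, then
`p_{5-n}(p_n(c)) ≡ c (mod d)`. -/
theorem p_comp_identity (n c d : ℤ) :
    (c ^ 2 + (1 - n) * c + 1) ^ 2 + (n - 4) * (c ^ 2 + (1 - n) * c + 1) + 1 =
      c + (c ^ 3 - n * c ^ 2 + (n - 1) * c - 1) * (c - n + 2) ∧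
    (d ∣ c ^ 3 - n * c ^ 2 + (n - 1) * c - 1 →
      (c ^ 2 + (1 - n) * c + 1) ^ 2 + (n - 4) * (c ^ 2 + (1 - n) * c + 1) + 1 ≡ c [ZMOD d]) := by
  have h : (c ^ 2 + (1 - n) * c + 1) ^ 2 + (n - 4) * (c ^ 2 + (1 - n) * c + 1) + 1 =
      c + (c ^ 3 - n * c ^ 2 + (n - 1) * c - 1) * (c - n + 2) := by ring
  refine ⟨h, fun hd => ?_⟩
  rw [h]
  exact (Int.modEq_iff_dvd.mpr (by simpa using hd.mul_right (c - n + 2))).symm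
end

section
/- For integers c, d with d ≠ 0, and n: d divides f_n(c) (where f_n(x) = x^3 - n x^2 + (n-1)x - 1) if and only if there exist integers a and b such that the 3×3 integer matrix with rows (0, a, b), (0, c, d), (1, 0, n-c) has determinant 1 and such that this matrix minus the identity also has determinant 1. -/
/-- For integers `c`, `d ≠ 0`, `n`: `d ∣ f_n(c)` iff there exist integers `a`, `b` such that the
matrix with rows `(0,a,b)`, `(0,c,d)`, `(1,0,n-c)` has determinant `1` and the matrix minus the
identity also has determinant `1`. -/
theorem csm_characterization (c d n : ℤ) (hd : d ≠ 0) :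
    d ∣ c ^ 3 - n * c ^ 2 + (n - 1) * c - 1 ↔
      ∃ a b : ℤ,
        (!![0, a, b; 0, c, d; 1, 0, n - c] : Matrix (Fin 3) (Fin 3) ℤ).det = 1 ∧
        ((!![0, a, b; 0, c, d; 1, 0, n - c] : Matrix (Fin 3) (Fin 3) ℤ) - 1).det = 1 := by
  constructor
  · rintro ⟨k, hk⟩
    refine ⟨-k, (c - 1) * (n - c - 1), ?_, ?_⟩ <;>
      simp [Matrix.det_fin_three, Matrix.sub_apply, Matrix.one_apply] <;>
      linear_combination hk
  · rintro ⟨a, b, h1, h2⟩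
    simp [Matrix.det_fin_three, Matrix.sub_apply, Matrix.one_apply] at h1 h2
    exact ⟨-a, by linear_combination (1-c)*h1 + c*h2⟩
end

section
/- Let Θ be a complex root of f_n(x) = x^3 - n x^2 + (n-1)x - 1, let c, d be integers, and let X be the matrix with rows (0, a, b), (0, c, d), (1, 0, n-c) where b = (c-1)(n-c-1) and a d - b c = 1. Then the vector ((Θ - n + c)(Θ - c), d, Θ - c) is an eigenvector of X with eigenvalue Θ. -/
/-- Let `Θ` be a complex root of `f_n`, and `X` the matrix with rows `(0,a,b)`, `(0,c,d)`,
`(1,0,n-c)` where `d ∣ f_n(c)`, `b = (c-1)(n-c-1)` and `a d - b c = 1`. Then the vector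
`((Θ - n + c)(Θ - c), d, Θ - c)` is an eigenvector of `X` with eigenvalue `Θ`. -/
theorem csm_eigenvector (n a b c d : ℤ) (Θ : ℂ)
    (hΘ : Θ ^ 3 - (n : ℂ) * Θ ^ 2 + ((n : ℂ) - 1) * Θ - 1 = 0)
    (hdvd : d ∣ c ^ 3 - n * c ^ 2 + (n - 1) * c - 1)
    (hb : b = (c - 1) * (n - c - 1))
    (had : a * d - b * c = 1) :
    (!![0, (a : ℂ), (b : ℂ); 0, (c : ℂ), (d : ℂ); 1, 0, ((n : ℂ) - c)] :
        Matrix (Fin 3) (Fin 3) ℂ).mulVec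
      ![(Θ - n + c) * (Θ - c), (d : ℂ), Θ - c] =
      Θ • ![(Θ - n + c) * (Θ - c), (d : ℂ), Θ - c] := by
  have hb' : (b : ℂ) = ((c : ℂ) - 1) * ((n : ℂ) - c - 1) := by push_cast [hb]; ring
  have had' : (a : ℂ) * d - (b : ℂ) * c = 1 := by exact_mod_cast had
  funext i
  fin_cases i <;>
    simp [Matrix.mulVec, dotProduct, Fin.sum_univ_succ] <;>
    first
      | linear_combination Θ * hb' + had' - hΘ
      | linear_combination -Θ * hb' - had' - hΘ
      | linear_combination Θ * hb' + had' + hΘ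
      | linear_combination -hΘ
      | linear_combination hΘ
      | ring
end

section
/- For every integer k, the ideal ⟨Θ - 2, 7⟩ of Z[Θ] is not invertible, where Θ is a root of f_{49k+27}(x) = x^3 - (49k+27)x^2 + (49k+26)x - 1. Consequently, Z[Θ] is not a Dedekind domain. -/
set_option synthInstance.maxHeartbeats 1000000
set_option maxHeartbeats 1000000

/-- The subring `ℤ[Θ]` of `ℂ` generated by `Θ`. -/
abbrev adjoinTheta (Θ : ℂ) : Subalgebra ℤ ℂ := Algebra.adjoin ℤ {Θ}

/-- `Θ` as an element of `ℤ[Θ]`. -/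
noncomputable abbrev thetaElt (Θ : ℂ) : adjoinTheta Θ := ⟨Θ, Algebra.self_mem_adjoin_singleton ℤ Θ⟩

/-!
Write `t = Θ - 2` and `I = (t, 7)`. Modulo 49 the cubic is `(X - 2)³ + 7·(multiple of X - 2)`,
so `t³ ∈ 7I` and hence `t² I ⊆ 7 I`. If `I` were invertible it could be cancelled, giving
`7 ∣ t²` in `ℤ[Θ]`. But the cubic is irreducible (`±1` are not roots), so it divides every integer
polynomial vanishing at `Θ`; reducing mod 7, where it becomes `(X - 2)³`, the relation `7 ∣ t²`
would give `(X - 2)³ ∣ (X - 2)²` in `𝔽₇[X]`. In a Dedekind domain `I ∣ (7)`, so `I` would be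
invertible.
-/

open Polynomial

theorem Ideal.le_of_mul_le_mul_right_of_mul_eq_span_singleton {R : Type*} [CommRing R]
    [IsDomain R] {I J K L : Ideal R} {α : R} (hα : α ≠ 0) (hIJ : I * J = span {α})
    (h : K * I ≤ L * I) : K ≤ L := by
  have hJ : K * I * J ≤ L * I * J := mul_mono_left h
  rwa [mul_assoc, mul_assoc, hIJ, mul_comm K, mul_comm L, span_singleton_mul_right_mono hα] at hJ

theorem Ideal.span_sq_mul_le_span_mul_of_cube_mem {R : Type*} [CommRing R] {t p : R}
    (h : t ^ 3 ∈ span {p} * span {t, p}) :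
    span {t ^ 2} * span {t, p} ≤ span {p} * span {t, p} := by
  rw [span_singleton_mul_le_iff]
  intro z hz
  obtain ⟨a, b, rfl⟩ := mem_span_pair.mp hz
  have hpt : p * t ^ 2 ∈ span {p} * span {t, p} :=
    mem_span_singleton_mul.mpr ⟨t ^ 2, pow_mem_of_mem _ (subset_span (by simp)) 2 two_pos, rfl⟩
  rw [show t ^ 2 * (a * t + b * p) = a * t ^ 3 + b * (p * t ^ 2) by ring]
  exact add_mem (mul_mem_left _ a h) (mul_mem_left _ b hpt)

theorem Polynomial.Monic.dvd_of_irreducible_of_aeval_eq_zero {R S : Type*} [CommRing R]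
    [IsDomain R] [IsIntegrallyClosed R] [CommRing S] [IsDomain S] [Algebra R S]
    [Module.IsTorsionFree R S] {f p : R[X]} {x : S} (hf : f.Monic) (hirr : Irreducible f)
    (hfx : aeval x f = 0) (hpx : aeval x p = 0) : f ∣ p :=
  have hx : IsIntegral R x := ⟨f, hf, hfx⟩
  have hmin : Associated (minpoly R x) f :=
    (minpoly.irreducible hx).associated_of_dvd hirr (minpoly.isIntegrallyClosed_dvd hx hfx)
  hmin.symm.dvd.trans (minpoly.isIntegrallyClosed_dvd hx hpx)

noncomputable def cubicPoly (n : ℤ) : ℤ[X] := X ^ 3 - C n * X ^ 2 + C (n - 1) * X - 1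

theorem aeval_cubicPoly {A : Type*} [CommRing A] (n : ℤ) (x : A) :
    aeval x (cubicPoly n) = x ^ 3 - n * x ^ 2 + (n - 1 : ℤ) * x - 1 := by
  simp [cubicPoly]

theorem cubicPoly_monic (n : ℤ) : (cubicPoly n).Monic := by
  unfold cubicPoly; monicity!

theorem natDegree_cubicPoly (n : ℤ) : (cubicPoly n).natDegree = 3 := by
  unfold cubicPoly; compute_degree!

theorem irreducible_cubicPoly (n : ℤ) : Irreducible (cubicPoly n) := by
  rw [(cubicPoly_monic n).irreducible_iff_roots_eq_zero_of_degree_le_three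
    (by rw [natDegree_cubicPoly]; norm_num) (by rw [natDegree_cubicPoly]),
    Multiset.eq_zero_iff_forall_notMem]
  intro m hm
  rw [mem_roots (cubicPoly_monic n).ne_zero, IsRoot.def, ← coe_aeval_eq_eval, aeval_cubicPoly,
    Int.cast_id, Int.cast_id] at hm
  have hunit : IsUnit m := .of_mul_eq_one (m ^ 2 - n * m + (n - 1)) (by linear_combination hm)
  rcases Int.isUnit_iff.mp hunit with rfl | rfl <;> omega

theorem cubicPoly_map_zmod_seven {n : ℤ} (hn : (n : ZMod 7) = 6) :
    (cubicPoly n).map (Int.castRingHom (ZMod 7)) = (X - C 2) ^ 3 := by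
  have h7 : (7 : (ZMod 7)[X]) = 0 := by
    rw [← map_ofNat C, show (7 : ZMod 7) = 0 from rfl, map_zero]
  have hn' : (n : (ZMod 7)[X]) = 6 := by rw [← C_eq_intCast, hn, map_ofNat]
  simp only [cubicPoly, Polynomial.map_sub, Polynomial.map_add, Polynomial.map_mul,
    Polynomial.map_pow, Polynomial.map_X, Polynomial.map_one, eq_intCast, Int.cast_sub,
    Int.cast_one, Polynomial.map_intCast, hn', map_ofNat]
  linear_combination (1 - X) * h7

theorem cubicPoly_not_dvd_C_seven_mul_sub_sq {n : ℤ} (hn : (n : ZMod 7) = 6) (p : ℤ[X]) :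
    ¬ cubicPoly n ∣ C 7 * p - (X - C 2) ^ 2 := by
  have : Fact (Nat.Prime 7) := ⟨by norm_num⟩
  intro hdvd
  replace hdvd := Polynomial.map_dvd (Int.castRingHom (ZMod 7)) hdvd
  rw [cubicPoly_map_zmod_seven hn, Polynomial.map_sub, Polynomial.map_mul, Polynomial.map_pow,
    Polynomial.map_sub, map_C, map_C, Polynomial.map_X, map_ofNat,
    show Int.castRingHom (ZMod 7) 7 = 0 from rfl, map_zero, zero_mul, zero_sub, dvd_neg] at hdvd
  exact absurd ((pow_dvd_pow_iff (X_sub_C_ne_zero _) (not_isUnit_X_sub_C _)).mp hdvd)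
    (by norm_num)

theorem aeval_thetaElt_eq_zero_iff {Θ : ℂ} {p : ℤ[X]} :
    aeval (thetaElt Θ) p = 0 ↔ aeval Θ p = 0 := by
  rw [Subtype.ext_iff, ← Subalgebra.aeval_coe]
  rfl

theorem exists_aeval_thetaElt_eq {Θ : ℂ} (r : adjoinTheta Θ) :
    ∃ p : ℤ[X], aeval (thetaElt Θ) p = r := by
  obtain ⟨p, hp⟩ := (Algebra.adjoin_singleton_eq_range_aeval ℤ Θ).le r.2
  exact ⟨p, Subtype.ext ((Subalgebra.aeval_coe _ (thetaElt Θ) p).symm.trans hp)⟩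

theorem not_seven_dvd_thetaElt_sub_two_sq {n : ℤ} (hn : (n : ZMod 7) = 6) {Θ : ℂ}
    (hΘ : aeval Θ (cubicPoly n) = 0) : ¬ (7 : adjoinTheta Θ) ∣ (thetaElt Θ - 2) ^ 2 := by
  rintro ⟨r, hr⟩
  obtain ⟨p, hp⟩ := exists_aeval_thetaElt_eq r
  have hpΘ : aeval Θ (C 7 * p - (X - C 2) ^ 2) = 0 := by
    rw [← aeval_thetaElt_eq_zero_iff]
    simp only [map_sub, map_mul, map_pow, aeval_X, hp, map_ofNat]
    linear_combination -hr
  exact cubicPoly_not_dvd_C_seven_mul_sub_sq hn p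
    ((cubicPoly_monic n).dvd_of_irreducible_of_aeval_eq_zero (irreducible_cubicPoly n) hΘ hpΘ)

theorem thetaElt_sub_two_cube_mem (k : ℤ) {Θ : ℂ} (hΘ : aeval Θ (cubicPoly (49 * k + 27)) = 0) :
    (thetaElt Θ - 2) ^ 3 ∈ Ideal.span {7} * Ideal.span {thetaElt Θ - 2, 7} := by
  set t := thetaElt Θ - 2
  have hθ := aeval_thetaElt_eq_zero_iff.mpr hΘ
  rw [aeval_cubicPoly] at hθ
  -- `f(t + 2) = t³ - 7 w` for the witness `w` below
  refine Ideal.mem_span_singleton_mul.mpr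
    ⟨(7 * k + 3 : ℤ) * t ^ 2 + (21 * k + 10 : ℤ) * t + (2 * k + 1 : ℤ) * 7, ?_, ?_⟩
  · have ht : t ∈ Ideal.span {t, 7} := Ideal.subset_span (by simp)
    have h7 : (7 : adjoinTheta Θ) ∈ Ideal.span {t, 7} := Ideal.subset_span (by simp)
    exact add_mem (add_mem (Ideal.mul_mem_left _ _ (Ideal.pow_mem_of_mem _ ht 2 two_pos))
      (Ideal.mul_mem_left _ _ ht)) (Ideal.mul_mem_left _ _ h7)
  · push_cast at hθ ⊢
    linear_combination -hθ

/-- For every integer `k` and every root `Θ` of `f_{49k+27}`, the ideal `⟨Θ - 2, 7⟩` of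
`ℤ[Θ]` is not invertible (no ideal multiplies it into a nonzero principal ideal);
consequently `ℤ[Θ]` is not a Dedekind domain. -/
theorem ideal_not_invertible_49k27 (k : ℤ) (Θ : ℂ)
    (hΘ : Θ ^ 3 - ((49 * k + 27 : ℤ) : ℂ) * Θ ^ 2 + ((49 * k + 26 : ℤ) : ℂ) * Θ - 1 = 0) :
    (¬ ∃ (J : Ideal (adjoinTheta Θ)) (α : adjoinTheta Θ), α ≠ 0 ∧
        Ideal.span {thetaElt Θ - 2, (7 : adjoinTheta Θ)} * J = Ideal.span {α}) ∧
    ¬ IsDedekindDomain (adjoinTheta Θ) := by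
  have hroot : aeval Θ (cubicPoly (49 * k + 27)) = 0 := by
    rw [aeval_cubicPoly, ← hΘ]
    push_cast
    ring
  have hle := Ideal.span_sq_mul_le_span_mul_of_cube_mem (thetaElt_sub_two_cube_mem k hroot)
  have hndvd := not_seven_dvd_thetaElt_sub_two_sq (by push_cast; reduce_mod_char) hroot
  have not_inv : ¬ ∃ (J : Ideal (adjoinTheta Θ)) (α : adjoinTheta Θ), α ≠ 0 ∧
      Ideal.span {thetaElt Θ - 2, (7 : adjoinTheta Θ)} * J = Ideal.span {α} := by
    rintro ⟨J, α, hα, hIJ⟩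
    exact hndvd (Ideal.span_singleton_le_span_singleton.mp
      (Ideal.le_of_mul_le_mul_right_of_mul_eq_span_singleton hα hIJ hle))
  refine ⟨not_inv, fun _ => not_inv ?_⟩
  obtain ⟨J, hJ⟩ := Ideal.dvd_iff_le.mpr (Ideal.span_mono (by simp) :
    Ideal.span {(7 : adjoinTheta Θ)} ≤ Ideal.span {thetaElt Θ - 2, 7})
  exact ⟨J, 7, by norm_num, hJ.symm⟩
end

section
/- For every integer k, the element η = (Θ - 2)^2 / 7 of Q(Θ), where Θ is a root of f_{49k+27}(x) = x^3 - (49k+27)x^2 + (49k+26)x - 1, is a root of g_k(x) = x^3 - (343k^2 + 336k + 83)x^2 + (245k^2 + 238k + 58)x - (28k^2 + 28k + 7); equivalently 343 * g_k((x-2)^2/7) = f_{49k+27}(x) * (x^3 + (49k+15)x^2 - (343k+142)x + 588k + 265) as polynomials over Q. -/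
open Polynomial

/-- For every integer `k`: if `Θ` is a root of `f_{49k+27}` then `η = (Θ-2)^2/7` is a root of
`g_k(x) = x^3 - (343k²+336k+83)x² + (245k²+238k+58)x - (28k²+28k+7)`; equivalently,
`343 * g_k((x-2)²/7) = f_{49k+27}(x) * (x³ + (49k+15)x² - (343k+142)x + 588k + 265)` as
polynomials over `ℚ`. -/
theorem eta_root_gk (k : ℤ) :
    (∀ Θ : ℂ,
      Θ ^ 3 - ((49 * k + 27 : ℤ) : ℂ) * Θ ^ 2 + ((49 * k + 26 : ℤ) : ℂ) * Θ - 1 = 0 →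
      ((Θ - 2) ^ 2 / 7) ^ 3
        - ((343 * k ^ 2 + 336 * k + 83 : ℤ) : ℂ) * ((Θ - 2) ^ 2 / 7) ^ 2
        + ((245 * k ^ 2 + 238 * k + 58 : ℤ) : ℂ) * ((Θ - 2) ^ 2 / 7)
        - ((28 * k ^ 2 + 28 * k + 7 : ℤ) : ℂ) = 0) ∧
    (C (343 : ℚ) *
        (X ^ 3 - C ((343 * k ^ 2 + 336 * k + 83 : ℤ) : ℚ) * X ^ 2
          + C ((245 * k ^ 2 + 238 * k + 58 : ℤ) : ℚ) * X
          - C ((28 * k ^ 2 + 28 * k + 7 : ℤ) : ℚ)).comp (C (7⁻¹ : ℚ) * (X - C 2) ^ 2) =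
      (X ^ 3 - C ((49 * k + 27 : ℤ) : ℚ) * X ^ 2 + C ((49 * k + 26 : ℤ) : ℚ) * X - 1) *
        (X ^ 3 + C ((49 * k + 15 : ℤ) : ℚ) * X ^ 2 - C ((343 * k + 142 : ℤ) : ℚ) * X
          + C ((588 * k + 265 : ℤ) : ℚ))) := by
  constructor
  · intro Θ h
    push_cast
    push_cast at h
    linear_combination ((Θ ^ 3 + (49*(k:ℂ)+15)*Θ^2 - (343*(k:ℂ)+142)*Θ + 588*(k:ℂ)+265)/343) * h
  · apply Polynomial.funext
    intro x
    simp only [eval_comp, eval_mul, eval_add, eval_sub, eval_pow, eval_X, eval_C, eval_one]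
    push_cast
    field_simp
    ring
end
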